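/- arXiv:1710.06355 — 2 statements merged into one kernel-verified Lean document; each statement's English description precedes it below -/
import Mathlib

section
/- The signed measure μ^{(1)}_α on R with density x ↦ (x^2 - 2x(α+1) + (α^2+1)) / (2απ·sqrt((b-x)(x-a))) on the interval (a,b), where a = (1-√α)^2 and b = (1+√α)^2 and α > 0, has total mass zero: the integral over (a,b) of this density equals 0. -/
/-! With `Q x = (b - x) * (x - a)` and `c = (a + b) / 2`, the function
`-(x - c) / 2 * √(Q x)` is an antiderivative of `((x - c)² - Q x) / (2 √(Q x))` on `(a, b)` and
vanishes at both endpoints. For `a = (1 - √α)²`, `b = (1 + √α)²` the numerator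
`((x - c)² - Q x) / 2` is exactly `x² - 2(α + 1)x + α² + 1`, so the integral is zero. -/

open Set

/-- When `f` is not integrable this holds by the convention that its integral is `0`. -/
theorem intervalIntegral.integral_eq_zero_of_hasDerivAt_of_eq {f F : ℝ → ℝ} {a b : ℝ}
    (hab : a ≤ b) (hcont : ContinuousOn F (Icc a b))
    (hderiv : ∀ x ∈ Ioo a b, HasDerivAt F (f x) x) (hFab : F a = F b) :
    ∫ x in a..b, f x = 0 := by
  by_cases hint : IntervalIntegrable f MeasureTheory.volume a b
  · rw [integral_eq_sub_of_hasDerivAt_of_le hab hcont hderiv hint, hFab, sub_self]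
  · exact integral_undef hint

theorem hasDerivAt_mul_sqrt_mul_sub {a b x : ℝ} (hx : x ∈ Ioo a b) :
    HasDerivAt (fun y => -((y - (a + b) / 2) / 2) * √((b - y) * (y - a)))
      (((x - (a + b) / 2) ^ 2 - (b - x) * (x - a)) / (2 * √((b - x) * (x - a)))) x := by
  have hQ : 0 < (b - x) * (x - a) := mul_pos (by linarith [hx.2]) (by linarith [hx.1])
  have hQ' : HasDerivAt (fun y => (b - y) * (y - a)) (-1 * (x - a) + (b - x) * 1) x :=
    ((hasDerivAt_id x).const_sub b).mul ((hasDerivAt_id x).sub_const a)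
  have hlin : HasDerivAt (fun y => -((y - (a + b) / 2) / 2)) (-(1 / 2)) x :=
    (((hasDerivAt_id x).sub_const _).div_const 2).neg
  refine (hlin.mul (hQ'.sqrt hQ.ne')).congr_deriv ?_
  have hsqrt := Real.sq_sqrt hQ.le
  have hsqrt_pos := Real.sqrt_pos.mpr hQ
  field_simp
  linear_combination (-4) * hsqrt

theorem integral_sq_sub_div_sqrt_eq_zero {a b : ℝ} (hab : a ≤ b) :
    ∫ x in a..b, ((x - (a + b) / 2) ^ 2 - (b - x) * (x - a)) / (2 * √((b - x) * (x - a))) = 0 :=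
  intervalIntegral.integral_eq_zero_of_hasDerivAt_of_eq hab
    (Continuous.continuousOn (by fun_prop))
    (fun _ hx => hasDerivAt_mul_sqrt_mul_sub hx) (by simp)

theorem mu1_total_mass_zero (α : ℝ) (hα : 0 < α) :
    ∫ x in ((1 - Real.sqrt α) ^ 2)..((1 + Real.sqrt α) ^ 2),
      (x ^ 2 - 2 * x * (α + 1) + α ^ 2 + 1) /
        Real.sqrt (((1 + Real.sqrt α) ^ 2 - x) * (x - (1 - Real.sqrt α) ^ 2)) = 0 := by
  have hs := Real.sq_sqrt hα.le
  have hab : (1 - √α) ^ 2 ≤ (1 + √α) ^ 2 := by nlinarith [Real.sqrt_nonneg α]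
  convert integral_sq_sub_div_sqrt_eq_zero hab using 3 with x
  rw [← div_div]
  congr 1
  linear_combination (2 * x - α - √α ^ 2) * hs
end

section
/- Let F and F' be the cumulative distribution functions of the empirical spectral measures of two n×n real symmetric matrices M and M'. Then ||F - F'||_∞ ≤ rank(M - M')/n. -/
/-- CDF of the empirical spectral distribution of a real symmetric matrix. -/
noncomputable def esdCDF {n : ℕ} {M : Matrix (Fin n) (Fin n) ℝ}
    (hM : M.IsHermitian) (x : ℝ) : ℝ :=
  (Finset.univ.filter (fun i => hM.eigenvalues i ≤ x)).card / n

/-!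
Let `V` be spanned by the eigenvectors of `M` with eigenvalue `≤ x`, `W` by those of `M'` with
eigenvalue `> x`, and `K = ker (M - M')`. The Rayleigh quotient of `M` is `≤ x` on `V`, that of
`M'` is `> x` on `W`, and the two agree on `K`, so `V ⊓ W ⊓ K = ⊥`. Counting dimensions,
`#{λᵢ(M) ≤ x} + (n - #{λᵢ(M') ≤ x}) + (n - rank (M - M')) ≤ 2n`, and symmetrically.
-/

open Finset Module Submodule

open scoped RealInnerProductSpace

namespace OrthonormalBasis

variable {ι 𝕜 E : Type*} [Fintype ι] [RCLike 𝕜] [NormedAddCommGroup E] [InnerProductSpace 𝕜 E]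
  (b : OrthonormalBasis ι 𝕜 E)

theorem inner_eq_zero_of_mem_span_image {s : Set ι} {v : E} (hv : v ∈ span 𝕜 (b '' s)) {i : ι}
    (hi : i ∉ s) : inner 𝕜 (b i) v = 0 := by
  have hle : span 𝕜 (b '' s) ≤ (𝕜 ∙ b i)ᗮ := by
    rw [span_le]
    rintro _ ⟨j, hj, rfl⟩
    rw [SetLike.mem_coe, mem_orthogonal_singleton_iff_inner_right]
    exact b.orthonormal.inner_eq_zero (ne_of_mem_of_not_mem hj hi).symm
  exact (mem_orthogonal_singleton_iff_inner_right).1 (hle hv)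

theorem finrank_span_image (s : Finset ι) : finrank 𝕜 (span 𝕜 (b '' s)) = #s := by
  rw [Set.image_eq_range]
  exact (finrank_span_eq_card (b.orthonormal.linearIndependent.comp _ Subtype.val_injective)).trans
    (Fintype.card_coe s)

end OrthonormalBasis

section Eigenbasis

variable {ι E : Type*} [Fintype ι] [NormedAddCommGroup E] [InnerProductSpace ℝ E]
  (b : OrthonormalBasis ι ℝ E) {μ : ι → ℝ} {T : E →ₗ[ℝ] E}

theorem inner_map_self_sub_mul_norm_sq (hT : ∀ i, T (b i) = μ i • b i) (x : ℝ) (v : E) :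
    ⟪T v, v⟫ - x * ‖v‖ ^ 2 = ∑ i, (μ i - x) * ⟪b i, v⟫ ^ 2 := by
  have hTv : T v = ∑ i, (μ i * ⟪b i, v⟫) • b i := by
    conv_lhs => rw [← b.sum_repr' v]
    simp only [map_sum, map_smul, hT, smul_smul, mul_comm]
  rw [← b.sum_sq_inner_right v, hTv, sum_inner, mul_sum, ← sum_sub_distrib]
  refine sum_congr rfl fun i _ => ?_
  rw [real_inner_smul_left]
  ring

theorem inner_map_self_le_of_mem_span (hT : ∀ i, T (b i) = μ i • b i) {x : ℝ} {s : Set ι}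
    (hs : ∀ i ∈ s, μ i ≤ x) {v : E} (hv : v ∈ span ℝ (b '' s)) : ⟪T v, v⟫ ≤ x * ‖v‖ ^ 2 := by
  rw [← sub_nonpos, inner_map_self_sub_mul_norm_sq b hT]
  refine sum_nonpos fun i _ => ?_
  by_cases hi : i ∈ s
  · exact mul_nonpos_of_nonpos_of_nonneg (sub_nonpos.2 (hs i hi)) (sq_nonneg _)
  · simp [b.inner_eq_zero_of_mem_span_image hv hi]

theorem mul_norm_sq_lt_inner_map_self_of_mem_span (hT : ∀ i, T (b i) = μ i • b i) {x : ℝ}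
    {s : Set ι} (hs : ∀ i ∈ s, x < μ i) {v : E} (hv : v ∈ span ℝ (b '' s)) (hv₀ : v ≠ 0) :
    x * ‖v‖ ^ 2 < ⟪T v, v⟫ := by
  rw [← sub_pos, inner_map_self_sub_mul_norm_sq b hT]
  have hterm (i : ι) : 0 ≤ (μ i - x) * ⟪b i, v⟫ ^ 2 := by
    by_cases hi : i ∈ s
    · exact mul_nonneg (sub_nonneg.2 (hs i hi).le) (sq_nonneg _)
    · simp [b.inner_eq_zero_of_mem_span_image hv hi]
  obtain ⟨i, hi⟩ : ∃ i, ⟪b i, v⟫ ≠ 0 := by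
    by_contra! h
    exact hv₀ (by simpa [h] using (b.sum_repr' v).symm)
  have his : i ∈ s := by_contra fun h => hi (b.inner_eq_zero_of_mem_span_image hv h)
  exact sum_pos' (fun i _ => hterm i)
    ⟨i, mem_univ i, mul_pos (sub_pos.2 (hs i his)) (by positivity)⟩

end Eigenbasis

theorem card_eigenvalues_le_le_add_finrank_range_sub {ι ι' E : Type*} [Fintype ι] [Fintype ι']
    [NormedAddCommGroup E] [InnerProductSpace ℝ E] (b : OrthonormalBasis ι ℝ E)
    (b' : OrthonormalBasis ι' ℝ E) {μ : ι → ℝ} {μ' : ι' → ℝ} {T T' : E →ₗ[ℝ] E}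
    (hT : ∀ i, T (b i) = μ i • b i) (hT' : ∀ i, T' (b' i) = μ' i • b' i) (x : ℝ) :
    #{i | μ i ≤ x} ≤ #{i | μ' i ≤ x} + finrank ℝ (LinearMap.range (T - T')) := by
  have : FiniteDimensional ℝ E := b.toBasis.finiteDimensional_of_finite
  have hrank := LinearMap.finrank_range_add_finrank_ker (T - T')
  set V := span ℝ (b '' ↑({i | μ i ≤ x} : Finset ι))
  set W := span ℝ (b' '' ↑({i | x < μ' i} : Finset ι'))
  set K := LinearMap.ker (T - T')
  have hdisj : Disjoint V (W ⊓ K) := by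
    rw [disjoint_def]
    rintro v hvV ⟨hvW, hvK⟩
    by_contra hv₀
    have hTv : T v = T' v := sub_eq_zero.1 hvK
    have hle := inner_map_self_le_of_mem_span b hT (x := x) (by simp) hvV
    have hlt := mul_norm_sq_lt_inner_map_self_of_mem_span b' hT' (x := x) (by simp) hvW hv₀
    rw [hTv] at hle
    linarith
  have hVWK := finrank_add_finrank_le_of_disjoint hdisj
  have hWK := finrank_sup_add_finrank_inf_eq W K
  have hsup := finrank_le (W ⊔ K)
  have hcard := card_filter_add_card_filter_not (s := univ) (fun i => μ' i ≤ x)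
  simp only [not_le, card_univ] at hcard
  rw [b.finrank_span_image] at hVWK
  rw [b'.finrank_span_image] at hWK
  rw [finrank_eq_card_basis b'.toBasis] at hVWK hsup hrank
  omega

namespace Matrix

variable {m : Type*} [Fintype m] [DecidableEq m]

theorem finrank_range_toEuclideanLin (A : Matrix m m ℝ) :
    finrank ℝ (LinearMap.range (toEuclideanLin A)) = A.rank :=
  (rank_eq_finrank_range_toLin A (PiLp.basisFun 2 ℝ m) (PiLp.basisFun 2 ℝ m)).symm

theorem rank_sub_comm (A B : Matrix m m ℝ) : (A - B).rank = (B - A).rank := by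
  rw [← finrank_range_toEuclideanLin, ← finrank_range_toEuclideanLin, ← neg_sub, map_neg,
    LinearMap.range_neg]

namespace IsHermitian

theorem toEuclideanLin_eigenvectorBasis {A : Matrix m m ℝ} (hA : A.IsHermitian) (i : m) :
    toEuclideanLin A (hA.eigenvectorBasis i) = hA.eigenvalues i • hA.eigenvectorBasis i :=
  congrArg (WithLp.equiv 2 (m → ℝ)).symm (hA.mulVec_eigenvectorBasis i)

theorem card_eigenvalues_le_le_add_rank_sub {A B : Matrix m m ℝ} (hA : A.IsHermitian)
    (hB : B.IsHermitian) (x : ℝ) :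
    #{i | hA.eigenvalues i ≤ x} ≤ #{i | hB.eigenvalues i ≤ x} + (A - B).rank := by
  rw [← finrank_range_toEuclideanLin, map_sub]
  exact card_eigenvalues_le_le_add_finrank_range_sub _ _ hA.toEuclideanLin_eigenvectorBasis
    hB.toEuclideanLin_eigenvectorBasis x

end IsHermitian

end Matrix

theorem rank_inequality_esd_general (n : ℕ) (M M' : Matrix (Fin n) (Fin n) ℝ)
    (hM : M.IsHermitian) (hM' : M'.IsHermitian) (x : ℝ) :
    |esdCDF hM x - esdCDF hM' x| ≤ ((M - M').rank : ℝ) / n := by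
  have h₁ := Nat.mono_cast (α := ℝ) (hM.card_eigenvalues_le_le_add_rank_sub hM' x)
  have h₂ := Nat.mono_cast (α := ℝ) (hM'.card_eigenvalues_le_le_add_rank_sub hM x)
  rw [Matrix.rank_sub_comm] at h₂
  push_cast at h₁ h₂
  rw [esdCDF, esdCDF, ← sub_div, abs_div, Nat.abs_cast]
  gcongr
  exact abs_sub_le_iff.2 ⟨by linarith, by linarith⟩

theorem rank_inequality_esd (n : ℕ) (hn : 0 < n) (M M' : Matrix (Fin n) (Fin n) ℝ)
    (hM : M.IsHermitian) (hM' : M'.IsHermitian) (x : ℝ) :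
    |esdCDF hM x - esdCDF hM' x| ≤ ((M - M').rank : ℝ) / n :=
  rank_inequality_esd_general n M M' hM hM' x
end
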